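/- Let A and B be symmetric positive semidefinite matrices, each partitioned into L×L blocks with A having blocks {A}_{l,l'} of size p_l × p_{l'} and B having blocks {B}_{l,l'} of size q_l × q_{l'}. Then the Khatri–Rao product A * B, defined as the block matrix whose (l,l') block is {A}_{l,l'} ⊗ {B}_{l,l'}, is positive semidefinite. -/

import Mathlib

/-- The Khatri–Rao (blockwise Kronecker) product of two symmetrically partitioned block
matrices: the `(l,l')` block of `khatriRao A B` is `{A}_{l,l'} ⊗ {B}_{l,l'}`. -/
def khatriRao {L : ℕ} {p q : Fin L → ℕ}
    (A : Matrix (Σ l, Fin (p l)) (Σ l, Fin (p l)) ℝ)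
    (B : Matrix (Σ l, Fin (q l)) (Σ l, Fin (q l)) ℝ) :
    Matrix (Σ l, Fin (p l) × Fin (q l)) (Σ l, Fin (p l) × Fin (q l)) ℝ :=
  Matrix.of fun x y => A ⟨x.1, x.2.1⟩ ⟨y.1, y.2.1⟩ * B ⟨x.1, x.2.2⟩ ⟨y.1, y.2.2⟩

open Matrix Kronecker

theorem khatriRao_eq_submatrix_kronecker {L : ℕ} {p q : Fin L → ℕ}
    (A : Matrix (Σ l, Fin (p l)) (Σ l, Fin (p l)) ℝ)
    (B : Matrix (Σ l, Fin (q l)) (Σ l, Fin (q l)) ℝ) :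
    khatriRao A B =
      (A ⊗ₖ B).submatrix (fun x => (⟨x.1, x.2.1⟩, ⟨x.1, x.2.2⟩))
        (fun x => (⟨x.1, x.2.1⟩, ⟨x.1, x.2.2⟩)) :=
  rfl

/-- The Khatri–Rao product of symmetrically partitioned positive semidefinite matrices
is positive semidefinite. -/
theorem khatriRao_posSemidef {L : ℕ} {p q : Fin L → ℕ}
    (A : Matrix (Σ l, Fin (p l)) (Σ l, Fin (p l)) ℝ)
    (B : Matrix (Σ l, Fin (q l)) (Σ l, Fin (q l)) ℝ)
    (hA : A.PosSemidef) (hB : B.PosSemidef) :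
    (khatriRao A B).PosSemidef := by
  rw [khatriRao_eq_submatrix_kronecker]
  exact (hA.kronecker hB).submatrix _
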